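/- arXiv:2601.13776 — 2 statements merged into one kernel-verified Lean document; each statement's English description precedes it below -/
import Mathlib

section
/- Let f : ℝⁿ → ℝⁿ be 1-Lipschitz and ε ≥ 0. Then the map x ↦ sqrt((1/2)x² + (1/2)f(x)² + ε) (applied coordinatewise, where the squares are coordinatewise) is 1-Lipschitz with respect to the Euclidean norm. -/
/-!
Coordinatewise, `√(a²/2 + b²/2 + ε) = ‖(a, b, √(2ε))‖ / √2` is a Euclidean norm in `ℝ³`, so the
reverse triangle inequality bounds the squared change of the `i`-th output coordinate by
`(Δxᵢ² + Δf(x)ᵢ²) / 2`. Summing over `i` gives `‖Δ out‖² ≤ (‖Δx‖² + ‖Δf(x)‖²) / 2 ≤ ‖Δx‖²`.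
-/

theorem sqrt_half_sq_add_half_sq_add_eq_norm {ε : ℝ} (hε : 0 ≤ ε) (a b : ℝ) :
    √((1 / 2) * a ^ 2 + (1 / 2) * b ^ 2 + ε) = ‖!₂[a, b, √(2 * ε)]‖ / √2 := by
  rw [EuclideanSpace.norm_eq, ← Real.sqrt_div' _ zero_le_two]
  congr 1
  simp only [Real.norm_eq_abs, sq_abs, Fin.sum_univ_three, Matrix.cons_val_zero,
    Matrix.cons_val_one, Matrix.cons_val, Real.sq_sqrt (mul_nonneg zero_le_two hε)]
  ring

theorem sq_sqrt_half_sq_add_half_sq_add_sub_le {ε : ℝ} (hε : 0 ≤ ε) (a b c d : ℝ) :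
    (√((1 / 2) * a ^ 2 + (1 / 2) * b ^ 2 + ε) - √((1 / 2) * c ^ 2 + (1 / 2) * d ^ 2 + ε)) ^ 2
      ≤ (1 / 2) * (a - c) ^ 2 + (1 / 2) * (b - d) ^ 2 := by
  set u : EuclideanSpace ℝ (Fin 3) := !₂[a, b, √(2 * ε)]
  set v : EuclideanSpace ℝ (Fin 3) := !₂[c, d, √(2 * ε)]
  have huv : ‖u - v‖ ^ 2 = (a - c) ^ 2 + (b - d) ^ 2 := by
    simp [u, v, EuclideanSpace.real_norm_sq_eq, Fin.sum_univ_three]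
  have hrev : (‖u‖ - ‖v‖) ^ 2 ≤ ‖u - v‖ ^ 2 := by
    simpa only [sq_abs] using pow_le_pow_left₀ (abs_nonneg _) (abs_norm_sub_norm_le u v) 2
  rw [sqrt_half_sq_add_half_sq_add_eq_norm hε, sqrt_half_sq_add_half_sq_add_eq_norm hε,
    ← sub_div, div_pow, Real.sq_sqrt zero_le_two]
  linarith

theorem EuclideanSpace.dist_toLp_map₂_sq_le {ι : Type*} [Fintype ι] (g : ℝ → ℝ → ℝ)
    (hg : ∀ a b c d, (g a b - g c d) ^ 2 ≤ (1 / 2) * (a - c) ^ 2 + (1 / 2) * (b - d) ^ 2)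
    (x y u v : EuclideanSpace ℝ ι) :
    dist (WithLp.toLp 2 fun i => g (x i) (u i) : EuclideanSpace ℝ ι)
        (WithLp.toLp 2 fun i => g (y i) (v i)) ^ 2
      ≤ (1 / 2) * dist x y ^ 2 + (1 / 2) * dist u v ^ 2 := by
  simp only [EuclideanSpace.dist_sq_eq, Real.dist_eq, sq_abs, Finset.mul_sum,
    ← Finset.sum_add_distrib]
  exact Finset.sum_le_sum fun i _ => hg _ _ _ _

/-- L2NormResidual: if `f` is 1-Lipschitz and `ε ≥ 0`, the coordinatewise map
`x ↦ √(x_i²/2 + f(x)_i²/2 + ε)` is 1-Lipschitz for the Euclidean norm. -/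
theorem l2norm_residual_lipschitz {n : ℕ}
    (f : EuclideanSpace ℝ (Fin n) → EuclideanSpace ℝ (Fin n))
    (hf : LipschitzWith 1 f) (ε : ℝ) (hε : 0 ≤ ε) :
    LipschitzWith 1 (fun x : EuclideanSpace ℝ (Fin n) =>
      (WithLp.toLp 2 (fun i => Real.sqrt ((1 / 2) * (x i) ^ 2 + (1 / 2) * (f x i) ^ 2 + ε)) :
        EuclideanSpace ℝ (Fin n))) := by
  refine LipschitzWith.of_dist_le_mul fun x y => ?_
  have hfxy : dist (f x) (f y) ≤ dist x y := by simpa using hf.dist_le_mul x y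
  rw [NNReal.coe_one, one_mul, ← pow_le_pow_iff_left₀ dist_nonneg dist_nonneg two_ne_zero]
  calc _ ≤ (1 / 2) * dist x y ^ 2 + (1 / 2) * dist (f x) (f y) ^ 2 :=
        EuclideanSpace.dist_toLp_map₂_sq_le _ (sq_sqrt_half_sq_add_half_sq_add_sub_le hε) _ _ _ _
    _ ≤ (1 / 2) * dist x y ^ 2 + (1 / 2) * dist x y ^ 2 := by gcongr
    _ = dist x y ^ 2 := by ring
end

section
/- For any diagonal matrix D ∈ ℝ^{m×m} with diagonal entries in [0,1] and any W ∈ ℝ^{m×n} with WᵀW ≼ I (i.e., ‖W‖₂ ≤ 1), the matrix I - 2WᵀDW has spectral norm at most 1. -/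
/-!
With `B = WᵀDW` the hypotheses give `0 ≼ B ≼ I`, because
`I - B = (I - WᵀW) + Wᵀ(I - D)W`. Hence `-I ≼ I - 2B ≼ I`, and for a symmetric matrix this
Loewner bound is the spectral norm bound, since the operator norm of a self-adjoint operator is
the supremum of its Rayleigh quotient in absolute value.
-/

open Matrix

namespace ContinuousLinearMap

variable {𝕜 E : Type*} [RCLike 𝕜] [NormedAddCommGroup E] [InnerProductSpace 𝕜 E]

theorem norm_le_of_isSymmetric_of_abs_re_inner_le {T : E →L[𝕜] E}
    (hT : (T : E →ₗ[𝕜] E).IsSymmetric) {c : ℝ} (hc : 0 ≤ c)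
    (h : ∀ x, |RCLike.re (inner 𝕜 (T x) x)| ≤ c * ‖x‖ ^ 2) : ‖T‖ ≤ c := by
  rw [T.norm_eq_iSup_rayleighQuotient hT]
  refine ciSup_le fun x => ?_
  rcases eq_or_ne x 0 with rfl | hx
  · simpa using hc
  · rw [rayleighQuotient, reApplyInnerSelf_apply, abs_div, abs_sq,
      div_le_iff₀ (by positivity)]
    exact h x

end ContinuousLinearMap

namespace Matrix

variable {ι : Type*} [Fintype ι] [DecidableEq ι]

theorem norm_toEuclideanCLM_le_of_posSemidef {A : Matrix ι ι ℝ} {c : ℝ} (hc : 0 ≤ c)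
    (hle : (c • 1 - A).PosSemidef) (hge : (c • 1 + A).PosSemidef) :
    ‖toEuclideanCLM (𝕜 := ℝ) A‖ ≤ c := by
  have hA : A.IsHermitian := by
    simpa using (isHermitian_one.smul (IsSelfAdjoint.all c)).sub hle.1
  refine ContinuousLinearMap.norm_le_of_isSymmetric_of_abs_re_inner_le
    (isSymmetric_toEuclideanLin_iff.mpr hA) hc fun x => ?_
  have hquad : inner ℝ (toEuclideanCLM (𝕜 := ℝ) A x) x = x ⬝ᵥ A *ᵥ x := by
    rw [real_inner_comm, inner_toEuclideanCLM]
  have hnorm : ‖x‖ ^ 2 = x ⬝ᵥ x := by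
    rw [← real_inner_self_eq_norm_sq, EuclideanSpace.inner_eq_star_dotProduct, star_trivial]
  have h1 := hle.dotProduct_mulVec_nonneg x
  have h2 := hge.dotProduct_mulVec_nonneg x
  simp only [star_trivial, sub_mulVec, add_mulVec, smul_mulVec, one_mulVec, dotProduct_sub,
    dotProduct_add, dotProduct_smul, smul_eq_mul] at h1 h2
  rw [RCLike.re_to_real, hquad, hnorm, abs_le]
  constructor <;> linarith

theorem norm_toEuclideanCLM_one_sub_two_smul_le_one {B : Matrix ι ι ℝ} (hB : B.PosSemidef)
    (hB_le_one : (1 - B).PosSemidef) :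
    ‖toEuclideanCLM (n := ι) (𝕜 := ℝ) (1 - (2 : ℝ) • B)‖ ≤ 1 := by
  refine norm_toEuclideanCLM_le_of_posSemidef zero_le_one ?_ ?_
  · convert hB.smul (zero_le_two (α := ℝ)) using 1
    module
  · convert hB_le_one.smul (zero_le_two (α := ℝ)) using 1
    module

variable {m R : Type*} [Fintype m] [DecidableEq m] [CommRing R] [PartialOrder R] [StarRing R]
  [StarOrderedRing R]

theorem PosSemidef.one_sub_conjTranspose_mul_diagonal_mul {W : Matrix m ι R} {d : m → R}
    (hW : (1 - Wᴴ * W).PosSemidef) (hd : d ≤ 1) : (1 - Wᴴ * diagonal d * W).PosSemidef := by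
  have hsplit : 1 - Wᴴ * diagonal d * W = (1 - Wᴴ * W) + Wᴴ * diagonal (1 - d) * W := by
    rw [show diagonal (1 - d) = diagonal 1 - diagonal d from (diagonal_sub 1 d).symm,
      diagonal_one', Matrix.mul_sub, Matrix.sub_mul, Matrix.mul_one]
    abel
  rw [hsplit]
  exact hW.add ((PosSemidef.diagonal (sub_nonneg.mpr hd)).conjTranspose_mul_mul_same W)

end Matrix

/-- If `D = diagonal d` with `d i ∈ [0,1]` and `WᵀW ≼ I`, then
`I - 2 Wᵀ D W` has spectral norm at most 1. -/
theorem sll_jacobian_spectral_norm_le_one {m n : ℕ} (d : Fin m → ℝ)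
    (hd : ∀ i, d i ∈ Set.Icc (0 : ℝ) 1)
    (W : Matrix (Fin m) (Fin n) ℝ)
    (hW : ((1 : Matrix (Fin n) (Fin n) ℝ) - Wᵀ * W).PosSemidef) :
    ‖(toEuclideanCLM (𝕜 := ℝ)
        ((1 : Matrix (Fin n) (Fin n) ℝ) - (2 : ℝ) • (Wᵀ * diagonal d * W)) :
        EuclideanSpace ℝ (Fin n) →L[ℝ] EuclideanSpace ℝ (Fin n))‖ ≤ 1 := by
  rw [← conjTranspose_eq_transpose_of_trivial] at hW ⊢
  exact norm_toEuclideanCLM_one_sub_two_smul_le_one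
    ((PosSemidef.diagonal fun i => (hd i).1).conjTranspose_mul_mul_same W)
    (hW.one_sub_conjTranspose_mul_diagonal_mul fun i => (hd i).2)
end
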